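/- Let H = (X, E) be a 4-uniform hypergraph admitting a no-rainbow 4-coloring c, let Ĥ = (X̂, Ê) be its reduced hypergraph, let R ⊆ X contain exactly one vertex from each equivalence class, and let ĉ : X̂ → {1, 2, 3, 4} be defined by ĉ([v]) = c(r) where r is the representative in R of the class [v]. If ĉ uses exactly 2 colors and some hyperedge ê ∈ Ê contains classes of both of these colors, then Ĥ admits a no-rainbow r-coloring for some r ∈ {3, 4}. -/

import Mathlib

/-!
The classes of the reduced hypergraph are the fibres of `v ↦ {e ∈ E : v ∈ e}`, and an edge of
`H` is a union of classes. Hence an edge meeting every class is all of `X`, and it would be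
rainbow under the surjective colouring `c`; so no reduced edge contains every class. With two
classes the hypothesis on `ĉ` produces such an edge, with three classes colour them with three
distinct colours. With four or more classes some class has two vertices, for otherwise `ĉ` would
be `c` and use four colours; give that class a colour of its own and spread three colours over
the others: a rainbow reduced edge then has at least four classes, one of them contributing two
vertices, which is too many for a `4`-edge.
-/

open Finset Function

def IsRainbow {β γ : Type*} (f : β → γ) (s : Finset β) : Prop :=
  ∀ i, ∃ x ∈ s, f x = i

theorem IsRainbow.card_le {β γ : Type*} [Fintype γ] {f : β → γ} {s : Finset β}
    (h : IsRainbow f s) : Fintype.card γ ≤ s.card :=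
  card_le_card_of_surjOn f fun i _ => by simpa using h i

theorem IsRainbow.eq_of_subset {β γ : Type*} [Fintype γ] {f : β → γ} {s t : Finset β}
    (h : IsRainbow f s) (hst : s ⊆ t) (ht : t.card ≤ Fintype.card γ) : s = t :=
  eq_of_subset_of_card_le hst (ht.trans h.card_le)

theorem isRainbow_univ_of_surjective {β γ : Type*} [Fintype β] {f : β → γ}
    (hf : Surjective f) : IsRainbow f univ :=
  fun i => (hf i).imp fun _ hx => ⟨mem_univ _, hx⟩

theorem exists_isRainbow_eq_last_iff {β : Type*} [DecidableEq β] (k : ℕ) [NeZero k]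
    {S : Finset β} {t : β} (ht : t ∈ S) (hk : k < S.card) :
    ∃ f : β → Fin (k + 1), IsRainbow f S ∧ ∀ s, f s = Fin.last k ↔ s = t := by
  have hcard : Fintype.card (Fin k) ≤ Fintype.card (S.erase t) := by
    rw [Fintype.card_fin, Fintype.card_coe, card_erase_of_mem ht]
    omega
  obtain ⟨ι⟩ := Function.Embedding.nonempty_of_card_le hcard
  let g : Fin k → β := fun i => ι i
  have hg : Injective g := Subtype.val_injective.comp ι.injective
  refine ⟨fun s => if s = t then Fin.last k else (invFun g s).castSucc, ?_, fun s => ?_⟩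
  · refine Fin.lastCases ⟨t, ht, if_pos rfl⟩ fun i => ⟨g i, mem_of_mem_erase (ι i).2, ?_⟩
    have hgi : g i ≠ t := ne_of_mem_erase (ι i).2
    simp only [if_neg hgi, leftInverse_invFun hg i]
  · by_cases hs : s = t <;> simp [hs, Fin.castSucc_ne_last]

theorem Finset.subset_of_injOn_of_image_subset {β γ : Type*} [DecidableEq γ] {f : β → γ}
    {s t : Finset β} (hf : Set.InjOn f t) (hst : s ⊆ t) (h : t.image f ⊆ s.image f) : t ⊆ s := by
  rw [← coe_subset, ← hf.image_subset_image_iff subset_rfl hst, ← coe_image, ← coe_image,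
    coe_subset]
  exact h

theorem not_injective_of_card_image_lt {α β γ : Type*} [Fintype α] [Fintype γ] [DecidableEq β]
    [DecidableEq γ] {sig : α → β} {c : α → γ} {chat : β → γ} {R : Finset α}
    (hc : Surjective c) (hRex : ∀ v, ∃ r ∈ R, sig r = sig v)
    (hchat : ∀ r ∈ R, chat (sig r) = c r)
    (hcard : ((univ.image sig).image chat).card < Fintype.card γ) : ¬ Injective sig := by
  intro hsig
  have hchat_eq : chat ∘ sig = c := funext fun v => by
    obtain ⟨r, hr, hrv⟩ := hRex v
    rw [comp_apply, ← hrv, hchat r hr, hsig hrv]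
  rw [image_image, hchat_eq, image_univ_of_surjective hc, card_univ] at hcard
  exact hcard.false

section Reduced

variable {α : Type*} [DecidableEq α] {E : Finset (Finset α)}

def incidence (E : Finset (Finset α)) (v : α) : Finset (Finset α) :=
  E.filter (v ∈ ·)

theorem mem_of_incidence_eq {e : Finset α} {x y : α} (he : e ∈ E) (hy : y ∈ e)
    (hxy : incidence E x = incidence E y) : x ∈ e := by
  have : e ∈ incidence E x := hxy ▸ mem_filter.2 ⟨he, hy⟩
  exact (mem_filter.1 this).2

theorem eq_univ_of_image_incidence_eq [Fintype α] {e : Finset α} (he : e ∈ E)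
    (h : univ.image (incidence E) ⊆ e.image (incidence E)) : e = univ := by
  refine eq_univ_of_forall fun x => ?_
  obtain ⟨y, hy, hyx⟩ := mem_image.1 (h (mem_image_of_mem _ (mem_univ x)))
  exact mem_of_incidence_eq he hy hyx.symm

theorem card_image_incidence_lt {e : Finset α} {u v y : α} (he : e ∈ E) (hy : y ∈ e)
    (huv : u ≠ v) (hu : incidence E u = incidence E y) (hv : incidence E v = incidence E y) :
    (e.image (incidence E)).card < e.card := by
  refine lt_of_le_of_ne card_image_le fun hcard => huv ?_
  exact card_image_iff.1 hcard (mem_of_incidence_eq he hy hu) (mem_of_incidence_eq he hy hv)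
    (hu.trans hv.symm)

end Reduced

theorem reduced_noRainbow_of_rainbow2_general {α : Type*} [Fintype α] [DecidableEq α]
    (E : Finset (Finset α)) (hunif : ∀ e ∈ E, e.card = 4)
    (c : α → Fin 4) (hc : Function.Surjective c)
    (hnr : ∀ e ∈ E, ¬ (∀ i : Fin 4, ∃ v ∈ e, c v = i))
    (sig : α → Finset (Finset α))
    (hsig : ∀ v : α, sig v = E.filter (fun e => v ∈ e))
    (R : Finset α)
    (hRex : ∀ v : α, ∃ r ∈ R, sig r = sig v)
    (chat : Finset (Finset α) → Fin 4)
    (hchat : ∀ r ∈ R, chat (sig r) = c r)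
    (h2 : ((Finset.univ.image sig).image chat).card = 2)
    (hrb : ∃ e ∈ E, ∀ q ∈ (Finset.univ.image sig).image chat,
        ∃ s ∈ e.image sig, chat s = q) :
    ∃ r : ℕ, (r = 3 ∨ r = 4) ∧
      ∃ c' : Finset (Finset α) → Fin r,
        (∀ i : Fin r, ∃ s ∈ Finset.univ.image sig, c' s = i) ∧
        ∀ e ∈ E, ¬ (∀ i : Fin r, ∃ s ∈ e.image sig, c' s = i) := by
  obtain rfl : sig = incidence E := funext hsig
  set X := univ.image (incidence E)
  have hcover : ∀ e ∈ E, ¬ X ⊆ e.image (incidence E) := fun e he h =>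
    hnr e he (eq_univ_of_image_incidence_eq he h ▸ isRainbow_univ_of_surjective hc)
  have hX : 2 ≤ X.card := h2 ▸ card_image_le
  obtain hX2 | hX3 | hX4 : X.card = 2 ∨ X.card = 3 ∨ 4 ≤ X.card := by omega
  · obtain ⟨e, he, hcolors⟩ := hrb
    have hinj : Set.InjOn chat X := card_image_iff.1 (h2.trans hX2.symm)
    exact (hcover e he (subset_of_injOn_of_image_subset hinj (image_subset_image (subset_univ e))
      fun q hq => mem_image.2 (hcolors q hq))).elim
  · obtain ⟨t, ht⟩ := card_pos.1 (by omega : 0 < X.card)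
    obtain ⟨f, hf, -⟩ := exists_isRainbow_eq_last_iff 2 ht (by omega)
    refine ⟨3, .inl rfl, f, hf, fun e he hrain => hcover e he ?_⟩
    exact (IsRainbow.eq_of_subset hrain (image_subset_image (subset_univ e)) (hX3.trans (Fintype.card_fin 3).symm).le).ge
  · obtain ⟨u, v, hsig, huv⟩ := not_injective_iff.1 <|
      not_injective_of_card_image_lt hc hRex hchat (h2.trans_lt (by simp))
    obtain ⟨f, hf, hlast⟩ := exists_isRainbow_eq_last_iff 3 (S := X)
      (mem_image_of_mem (incidence E) (mem_univ u)) (by omega)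
    refine ⟨4, .inr rfl, f, hf, fun e he hrain => ?_⟩
    obtain ⟨s, hs, hfs⟩ := hrain (Fin.last 3)
    obtain ⟨y, hy, rfl⟩ := mem_image.1 hs
    have hyu := (hlast _).1 hfs
    have hlt := card_image_incidence_lt he hy huv hyu.symm (hsig.symm.trans hyu.symm)
    have h4 : 4 ≤ (e.image (incidence E)).card := by simpa using IsRainbow.card_le hrain
    have := hunif e he
    omega

/-- Let `(X, E)` be a 4-uniform hypergraph admitting a no-rainbow
4-coloring `c`, let `Ĥ` be its reduced hypergraph (vertices = equivalence classes
under "belongs to exactly the same hyperedges", each class identified with the common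
incidence set `sig v = {e ∈ E : v ∈ e}`; hyperedges `e.image sig` for `e ∈ E`), let
`R ⊆ X` contain exactly one vertex from each class, and let `chat` assign to each
class the `c`-color of its representative in `R`.  If `chat` uses exactly 2 colors and
some hyperedge of `Ĥ` contains classes of both of these colors, then `Ĥ` admits a
no-rainbow `r`-coloring for some `r ∈ {3, 4}`. -/
theorem reduced_noRainbow_of_rainbow2 {α : Type*} [Fintype α] [DecidableEq α]
    (E : Finset (Finset α)) (hunif : ∀ e ∈ E, e.card = 4)
    (c : α → Fin 4) (hc : Function.Surjective c)
    (hnr : ∀ e ∈ E, ¬ (∀ i : Fin 4, ∃ v ∈ e, c v = i))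
    (sig : α → Finset (Finset α))
    (hsig : ∀ v : α, sig v = E.filter (fun e => v ∈ e))
    (R : Finset α)
    (hRex : ∀ v : α, ∃ r ∈ R, sig r = sig v)
    (hRuniq : ∀ r₁ ∈ R, ∀ r₂ ∈ R, sig r₁ = sig r₂ → r₁ = r₂)
    (chat : Finset (Finset α) → Fin 4)
    (hchat : ∀ r ∈ R, chat (sig r) = c r)
    (h2 : ((Finset.univ.image sig).image chat).card = 2)
    (hrb : ∃ e ∈ E, ∀ q ∈ (Finset.univ.image sig).image chat,
        ∃ s ∈ e.image sig, chat s = q) :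
    ∃ r : ℕ, (r = 3 ∨ r = 4) ∧
      ∃ c' : Finset (Finset α) → Fin r,
        (∀ i : Fin r, ∃ s ∈ Finset.univ.image sig, c' s = i) ∧
        ∀ e ∈ E, ¬ (∀ i : Fin r, ∃ s ∈ e.image sig, c' s = i) :=
  reduced_noRainbow_of_rainbow2_general E hunif c hc hnr sig hsig R hRex chat hchat h2 hrb
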